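/- In the hyperplane H = {x ∈ ℝ^{n+1} : Σx_i = 0}, the norm associated to the Voronoï region of A_n is given by ‖x‖_P = max_j x_j − min_i x_i for all x ∈ H. -/

import Mathlib

/-!
Expanding the squares, `z ∈ H` lies in the Voronoï region iff `2⟪z, x⟫ ≤ ‖x‖²` for all `x ∈ Aₙ`.
The roots `eᵢ - eⱼ` force `zᵢ - zⱼ ≤ 1`. Conversely, if all coordinate differences are at most `1`,
subtracting the minimal coordinate from `z` (which does not change `⟪z, x⟫` since `∑ xₖ = 0`) gives
coordinates `tₖ ∈ [0, 1]`, and `2 t m ≤ m² + m` for every integer `m`; summing over `k` gives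
`2⟪z, x⟫ ≤ ‖x‖² + ∑ xₖ = ‖x‖²`. So `P = {z ∈ H | max z - min z ≤ 1}`, whose gauge is `max - min`.
-/

open Set Filter MeasureTheory Pointwise

/-- The hyperplane `H = {x ∈ ℝ^{n+1} : ∑ xᵢ = 0}`. -/
def Hset (n : ℕ) : Set (Fin (n + 1) → ℝ) := {x | ∑ i, x i = 0}

/-- The root lattice `Aₙ = ℤ^{n+1} ∩ H`. -/
def Alat (n : ℕ) : Set (Fin (n + 1) → ℝ) :=
  {x | (∀ i, ∃ m : ℤ, x i = (m : ℝ)) ∧ ∑ i, x i = 0}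

/-- The Voronoï region of `Aₙ` inside `H`. -/
def VorAn (n : ℕ) : Set (Fin (n + 1) → ℝ) :=
  {z | z ∈ Hset n ∧ ∀ x ∈ Alat n, ∑ i, (z i) ^ 2 ≤ ∑ i, (z i - x i) ^ 2}

/-- Orthogonal projection of `ℝ^{n+1}` onto the hyperplane `H`. -/
noncomputable def pH (n : ℕ) (u : Fin (n + 1) → ℝ) : Fin (n + 1) → ℝ :=
  fun i => u i - (∑ j, u j) / (n + 1)

/-- `V₀ = {0,1}^{n+1} \ {0, (1,…,1)}`. -/
def V0set (n : ℕ) : Set (Fin (n + 1) → ℝ) :=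
  {u | (∀ i, u i = 0 ∨ u i = 1) ∧ u ≠ 0 ∧ u ≠ fun _ => 1}

/-- The vertex set of the Voronoï region of `Aₙ`. -/
noncomputable def VPAn (n : ℕ) : Set (Fin (n + 1) → ℝ) := pH n '' V0set n

theorem sum_sq_le_sum_sub_sq_iff {ι : Type*} [Fintype ι] (z x : ι → ℝ) :
    ∑ i, z i ^ 2 ≤ ∑ i, (z i - x i) ^ 2 ↔ 2 * ∑ i, z i * x i ≤ ∑ i, x i ^ 2 := by
  have h : ∑ i, (z i - x i) ^ 2 = ∑ i, z i ^ 2 - 2 * ∑ i, z i * x i + ∑ i, x i ^ 2 := by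
    simp only [sub_sq, Finset.sum_add_distrib, Finset.sum_sub_distrib, Finset.mul_sum, mul_assoc]
  rw [h]
  constructor <;> intro <;> linarith

theorem two_mul_mul_intCast_le {t : ℝ} (ht₀ : 0 ≤ t) (ht₁ : t ≤ 1) (m : ℤ) :
    2 * t * m ≤ (m : ℝ) ^ 2 + m := by
  have hm : (0 : ℝ) ≤ m * (m + 1) ∧ (0 : ℝ) ≤ m * (m - 1) := by
    have : (0 : ℤ) ≤ m * (m + 1) ∧ (0 : ℤ) ≤ m * (m - 1) := by
      rcases le_or_gt 0 m with h | h
      · rcases h.eq_or_lt with rfl | h <;> constructor <;> nlinarith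
      · constructor <;> nlinarith
    exact_mod_cast this
  -- `m² + m - 2tm = (1 - t)·m(m + 1) + t·m(m - 1)`
  nlinarith [mul_nonneg (sub_nonneg.2 ht₁) hm.1, mul_nonneg ht₀ hm.2]

theorem ciSup_sub_ciInf_le_iff {ι : Type*} [Finite ι] [Nonempty ι] (x : ι → ℝ) (l : ℝ) :
    (⨆ i, x i) - (⨅ i, x i) ≤ l ↔ ∀ i j, x i - x j ≤ l := by
  rw [sub_le_iff_le_add, ciSup_le_iff (Set.finite_range x).bddAbove]
  refine forall_congr' fun i => ?_
  rw [← sub_le_iff_le_add', le_ciInf_iff (Set.finite_range x).bddBelow]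
  simp only [sub_le_comm]

theorem eq_zero_of_sum_eq_zero_of_forall_sub_nonpos {ι : Type*} [Fintype ι] [Nonempty ι]
    {x : ι → ℝ} (hx : ∑ i, x i = 0) (h : ∀ i j, x i - x j ≤ 0) : x = 0 := by
  funext i
  have hle : ∑ _j : ι, x i ≤ ∑ j, x j := Finset.sum_le_sum fun j _ => sub_nonpos.1 (h i j)
  have hge : ∑ j, x j ≤ ∑ _j : ι, x i := Finset.sum_le_sum fun j _ => sub_nonpos.1 (h j i)
  rw [hx, Finset.sum_const, Finset.card_univ, nsmul_eq_mul] at hle hge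
  have hcard : (0 : ℝ) < Fintype.card ι := by exact_mod_cast Fintype.card_pos
  exact le_antisymm (nonpos_of_mul_nonpos_right hle hcard) (nonneg_of_mul_nonneg_right hge hcard)

section VoronoiRegion

variable {n : ℕ}

theorem mem_VorAn_iff_sum_mul_le (z : Fin (n + 1) → ℝ) :
    z ∈ VorAn n ↔ z ∈ Hset n ∧ ∀ x ∈ Alat n, 2 * ∑ i, z i * x i ≤ ∑ i, x i ^ 2 := by
  simp only [VorAn, Set.mem_ofPred_eq, sum_sq_le_sum_sub_sq_iff]

theorem single_sub_single_mem_Alat (i j : Fin (n + 1)) :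
    (Pi.single i 1 - Pi.single j 1 : Fin (n + 1) → ℝ) ∈ Alat n := by
  refine ⟨fun k => ⟨(Pi.single i 1 - Pi.single j 1 : Fin (n + 1) → ℤ) k, ?_⟩, ?_⟩
  · simp only [Pi.sub_apply, Pi.single_apply]
    split_ifs <;> simp
  · simp [Finset.sum_sub_distrib]

theorem sub_le_one_of_mem_VorAn {z : Fin (n + 1) → ℝ} (hz : z ∈ VorAn n) (i j : Fin (n + 1)) :
    z i - z j ≤ 1 := by
  rcases eq_or_ne i j with rfl | hij
  · simp
  have h := ((mem_VorAn_iff_sum_mul_le z).1 hz).2 _ (single_sub_single_mem_Alat i j)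
  simp only [Pi.sub_apply, Pi.single_apply, sub_sq, ite_pow, mul_sub, mul_ite, mul_one, mul_zero,
    Finset.sum_add_distrib, Finset.sum_sub_distrib, Finset.sum_ite_eq', Finset.mem_univ, if_true,
    if_neg hij.symm] at h
  norm_num at h
  linarith

theorem mem_VorAn_of_forall_sub_le_one {z : Fin (n + 1) → ℝ} (hz : z ∈ Hset n)
    (h : ∀ i j, z i - z j ≤ 1) : z ∈ VorAn n := by
  refine (mem_VorAn_iff_sum_mul_le z).2 ⟨hz, fun x hx => ?_⟩
  obtain ⟨i₀, hi₀⟩ := Finite.exists_min z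
  calc 2 * ∑ k, z k * x k = ∑ k, 2 * (z k - z i₀) * x k := by
        simp only [mul_assoc, ← Finset.mul_sum, sub_mul, Finset.sum_sub_distrib, hx.2, mul_zero,
          sub_zero]
    _ ≤ ∑ k, (x k ^ 2 + x k) := Finset.sum_le_sum fun k _ => by
        obtain ⟨m, hm⟩ := hx.1 k
        rw [hm]
        exact two_mul_mul_intCast_le (sub_nonneg.2 (hi₀ k)) (h k i₀) m
    _ = ∑ k, x k ^ 2 := by rw [Finset.sum_add_distrib, hx.2, add_zero]

theorem mem_VorAn_iff (z : Fin (n + 1) → ℝ) :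
    z ∈ VorAn n ↔ z ∈ Hset n ∧ ∀ i j, z i - z j ≤ 1 :=
  ⟨fun hz => ⟨hz.1, sub_le_one_of_mem_VorAn hz⟩, fun h => mem_VorAn_of_forall_sub_le_one h.1 h.2⟩

theorem mem_smul_VorAn_iff {l : ℝ} (hl : 0 ≤ l) (x : Fin (n + 1) → ℝ) :
    x ∈ l • VorAn n ↔ x ∈ Hset n ∧ ∀ i j, x i - x j ≤ l := by
  rcases hl.eq_or_lt with rfl | hl
  · rw [zero_smul_set ⟨0, (mem_VorAn_iff 0).2 ⟨by simp [Hset], by simp⟩⟩, Set.mem_zero]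
    constructor
    · rintro rfl
      simp [Hset]
    · exact fun h => eq_zero_of_sum_eq_zero_of_forall_sub_nonpos h.1 h.2
  · simp only [mem_smul_set_iff_inv_smul_mem₀ hl.ne', mem_VorAn_iff, Hset, Set.mem_ofPred_eq,
      Pi.smul_apply, smul_eq_mul, ← Finset.mul_sum, ← mul_sub, inv_mul_le_iff₀ hl, mul_one,
      mul_eq_zero, inv_eq_zero, hl.ne', false_or]

end VoronoiRegion

theorem norm_voronoi_An_eq_max_sub_min (n : ℕ) :
    ∀ x ∈ Hset n,
      sInf {l : ℝ | 0 ≤ l ∧ x ∈ l • VorAn n} = (⨆ i, x i) - (⨅ i, x i) := by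
  intro x hx
  suffices {l : ℝ | 0 ≤ l ∧ x ∈ l • VorAn n} = Set.Ici ((⨆ i, x i) - (⨅ i, x i)) by
    rw [this, csInf_Ici]
  ext l
  rw [Set.mem_ofPred_eq, Set.mem_Ici, ciSup_sub_ciInf_le_iff]
  constructor
  · rintro ⟨hl, hxl⟩
    exact ((mem_smul_VorAn_iff hl x).1 hxl).2
  · intro h
    have hl : 0 ≤ l := by simpa using h 0 0
    exact ⟨hl, (mem_smul_VorAn_iff hl x).2 ⟨hx, h⟩⟩
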